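/- arXiv:2304.10166 — 3 statements merged into one kernel-verified Lean document; each statement's English description precedes it below -/
import Mathlib

section
/- The Thue–Morse sequence is cube-free: there is no nonempty word u and index i such that the factor of the Thue–Morse sequence starting at i equals u·u·u. -/
/-!
Write `t` for the Thue–Morse sequence. Since `t (2n) = t n` and `t (2n + 1) = !t n`, an
equality `t n = t (n + 1)` forces `n` to be odd. If a cube `uuu` has `|u| = k` even, the even
positions of its window carry a cube of period `k / 2`, so by descent `k` is odd. For `k = 1`,
`t i = t (i + 1) = t (i + 2)` makes both `i` and `i + 1` odd. For `k = 2c + 1 ≥ 3`, translate the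
jumps `t (2a) ≠ t (2a + 1)` and `t (2a + 2) ≠ t (2a + 3)` of the window by `k`: they land at
`2(a + c) + 1` and `2(a + c + 1) + 1`, and `t (2m + 1) ≠ t (2m + 2)` forces `m` odd, so both
`a + c` and `a + c + 1` would be odd.
-/

/-- The Thue–Morse sequence as a Boolean sequence. -/
def thueMorse (n : ℕ) : Bool := (Nat.digits 2 n).count 1 % 2 = 1

section Cube

variable {α : Type*}

/-- A cube `uuu` with `|u| = k` starts at `i`: `f` is `k`-periodic on `[i, i + 3k)`. -/
def HasCubeAt (f : ℕ → α) (i k : ℕ) : Prop :=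
  0 < k ∧ ∀ x, i ≤ x → x < i + 2 * k → f x = f (x + k)

theorem hasCubeAt_of_forall_lt {f : ℕ → α} {i k : ℕ} (hk : 0 < k)
    (h : ∀ j < k, f (i + j) = f (i + k + j) ∧ f (i + k + j) = f (i + 2 * k + j)) :
    HasCubeAt f i k := by
  refine ⟨hk, fun x hix hx => ?_⟩
  rcases lt_or_ge x (i + k) with hxk | hxk
  · obtain ⟨j, rfl⟩ := Nat.exists_eq_add_of_le hix
    rw [add_right_comm]
    exact (h j (by omega)).1
  · obtain ⟨j, rfl⟩ := Nat.exists_eq_add_of_le hxk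
    rw [show i + k + j + k = i + 2 * k + j by ring]
    exact (h j (by omega)).2

theorem HasCubeAt.comp_two_mul {f : ℕ → α} {i b : ℕ} (h : HasCubeAt f i (2 * b)) :
    HasCubeAt (fun y => f (2 * y)) ((i + 1) / 2) b := by
  have hb := h.1
  refine ⟨by omega, fun y hy hy' => ?_⟩
  simpa only [mul_add] using h.2 (2 * y) (by omega) (by omega)

end Cube

theorem thueMorse_two_mul (n : ℕ) : thueMorse (2 * n) = thueMorse n := by
  rcases Nat.eq_zero_or_pos n with rfl | hn
  · rfl
  · simp [thueMorse, Nat.digits_def' one_lt_two (by omega : 0 < 2 * n)]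

theorem thueMorse_two_mul_add_one (n : ℕ) : thueMorse (2 * n + 1) = !thueMorse n := by
  have hdiv : (2 * n + 1) / 2 = n := by omega
  simp only [thueMorse, Nat.digits_def' one_lt_two (Nat.succ_pos _), hdiv, List.count_cons]
  by_cases h : (Nat.digits 2 n).count 1 % 2 = 1 <;> simp [h] <;> omega

theorem thueMorse_ne_succ_of_even {n : ℕ} (hn : Even n) : thueMorse n ≠ thueMorse (n + 1) := by
  obtain ⟨m, rfl⟩ := hn
  rw [← two_mul, thueMorse_two_mul, thueMorse_two_mul_add_one]
  exact (Bool.not_ne_self _).symm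

theorem odd_of_thueMorse_eq_succ {n : ℕ} (h : thueMorse n = thueMorse (n + 1)) : Odd n :=
  Nat.not_even_iff_odd.1 fun hn => thueMorse_ne_succ_of_even hn h

theorem odd_of_thueMorse_two_mul_add_one_ne {m : ℕ}
    (h : thueMorse (2 * m + 1) ≠ thueMorse (2 * m + 2)) : Odd m := by
  rw [thueMorse_two_mul_add_one, show 2 * m + 2 = 2 * (m + 1) by ring, thueMorse_two_mul] at h
  exact odd_of_thueMorse_eq_succ (by simpa using h)

theorem not_hasCubeAt_thueMorse_one (i : ℕ) : ¬ HasCubeAt thueMorse i 1 := by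
  rintro ⟨-, h⟩
  have hi := odd_of_thueMorse_eq_succ (h i le_rfl (by omega))
  have hi' := odd_of_thueMorse_eq_succ (h (i + 1) (by omega) (by omega))
  exact Nat.not_even_iff_odd.2 hi' hi.add_one

theorem not_hasCubeAt_thueMorse_two_mul_add_one {c : ℕ} (hc : 0 < c) (i : ℕ) :
    ¬ HasCubeAt thueMorse i (2 * c + 1) := by
  rintro ⟨-, h⟩
  have translate : ∀ a, i ≤ 2 * a → 2 * a + 1 < i + 2 * (2 * c + 1) → Odd (a + c) := by
    intro a hia ha
    apply odd_of_thueMorse_two_mul_add_one_ne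
    rw [show 2 * (a + c) + 1 = 2 * a + (2 * c + 1) by ring,
      show 2 * (a + c) + 2 = 2 * a + 1 + (2 * c + 1) by ring,
      ← h (2 * a) hia (by omega), ← h (2 * a + 1) (by omega) ha]
    exact thueMorse_ne_succ_of_even (even_two_mul a)
  have ha := translate ((i + 1) / 2) (by omega) (by omega)
  have ha' := translate ((i + 1) / 2 + 1) (by omega) (by omega)
  rw [add_right_comm] at ha'
  exact Nat.not_even_iff_odd.2 ha' ha.add_one

theorem not_hasCubeAt_thueMorse (i k : ℕ) : ¬ HasCubeAt thueMorse i k := by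
  induction k using Nat.strong_induction_on generalizing i with
  | _ k ih =>
  intro h
  obtain ⟨b, rfl | rfl⟩ := Nat.even_or_odd' k
  · have hb := h.1
    exact ih b (by omega) _ (by simpa only [thueMorse_two_mul] using h.comp_two_mul)
  · rcases Nat.eq_zero_or_pos b with rfl | hb
    · exact not_hasCubeAt_thueMorse_one i h
    · exact not_hasCubeAt_thueMorse_two_mul_add_one hb i h

/-- The Thue–Morse sequence is cube-free. -/
theorem thueMorse_cubefree :
    ¬ ∃ i k : ℕ, 0 < k ∧ ∀ j < k,
      thueMorse (i + j) = thueMorse (i + k + j) ∧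
      thueMorse (i + k + j) = thueMorse (i + 2 * k + j) := by
  rintro ⟨i, k, hk, hcube⟩
  exact not_hasCubeAt_thueMorse i k (hasCubeAt_of_forall_lt hk hcube)
end

section
/- Every language built from singleton languages of finite words using concatenation and Kleene plus contains at most one square-free word. -/
/-- A finite word is square-free if it has no nonempty factor of the form `u ++ u`. -/
def SqFreeWord {α : Type} (w : List α) : Prop :=
  ¬ ∃ (x u y : List α), u ≠ [] ∧ w = x ++ u ++ u ++ y

/-- The Kleene plus of a language: joins of nonempty lists of words from `L`. -/
def KleenePlus {α : Type} (L : Set (List α)) : Set (List α) :=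
  {w | ∃ vs : List (List α), vs ≠ [] ∧ (∀ v ∈ vs, v ∈ L) ∧ w = vs.flatten}

/-- Languages built from singletons by concatenation and Kleene plus. -/
inductive GenLang {α : Type} : Set (List α) → Prop
  | singleton (w : List α) : GenLang {w}
  | concat {L₁ L₂ : Set (List α)} : GenLang L₁ → GenLang L₂ →
      GenLang {w | ∃ a ∈ L₁, ∃ b ∈ L₂, w = a ++ b}
  | plus {L : Set (List α)} : GenLang L → GenLang (KleenePlus L)

/-! Square-freeness passes to factors, so a square-free word of `L₁ · L₂` is a product of
square-free words of `L₁` and `L₂`, and a square-free word of `L⁺` is a product of square-free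
words of `L`. In the latter, two nonempty factors would both be the unique square-free word `s`
of `L`, and then `s ++ s` would be a factor; so the word itself lies in `L`. -/

section SqFreeWord

variable {α : Type}

theorem SqFreeWord.of_infix {v w : List α} (hw : SqFreeWord w) (hvw : v <:+: w) :
    SqFreeWord v := by
  rintro ⟨x, u, y, hu, rfl⟩
  obtain ⟨s, t, rfl⟩ := hvw
  exact hw ⟨s ++ x, u, y ++ t, hu, by simp⟩

theorem SqFreeWord.left {u v : List α} (h : SqFreeWord (u ++ v)) : SqFreeWord u :=
  h.of_infix (List.prefix_append u v).isInfix

theorem SqFreeWord.right {u v : List α} (h : SqFreeWord (u ++ v)) : SqFreeWord v :=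
  h.of_infix (List.suffix_append u v).isInfix

theorem SqFreeWord.eq_nil_of_append_self {u : List α} (h : SqFreeWord (u ++ u)) : u = [] := by
  by_contra hu
  exact h ⟨[], u, [], hu, by simp⟩

end SqFreeWord

section Languages

variable {α : Type} {L L₁ L₂ : Set (List α)}

theorem subsingleton_sqFree_concat (h₁ : {w ∈ L₁ | SqFreeWord w}.Subsingleton)
    (h₂ : {w ∈ L₂ | SqFreeWord w}.Subsingleton) :
    {w ∈ {w | ∃ a ∈ L₁, ∃ b ∈ L₂, w = a ++ b} | SqFreeWord w}.Subsingleton := by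
  refine (h₁.image2 h₂ (· ++ ·)).anti ?_
  rintro _ ⟨⟨a, ha, b, hb, rfl⟩, hab⟩
  exact ⟨a, ⟨ha, hab.left⟩, b, ⟨hb, hab.right⟩, rfl⟩

theorem flatten_mem_of_sqFreeWord (hL : {w ∈ L | SqFreeWord w}.Subsingleton)
    {vs : List (List α)} (hne : vs ≠ []) (hmem : ∀ v ∈ vs, v ∈ L)
    (hsq : SqFreeWord vs.flatten) : vs.flatten ∈ L := by
  induction vs with
  | nil => exact absurd rfl hne
  | cons v rest ih =>
    rw [List.flatten_cons] at hsq ⊢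
    rcases eq_or_ne rest [] with rfl | hrest
    · simpa using hmem v List.mem_cons_self
    have hrestL : rest.flatten ∈ L :=
      ih hrest (fun u hu => hmem u (List.mem_cons_of_mem v hu)) hsq.right
    rcases eq_or_ne v [] with rfl | hv
    · simpa using hrestL
    have hv_eq : v = rest.flatten := hL ⟨hmem v List.mem_cons_self, hsq.left⟩ ⟨hrestL, hsq.right⟩
    rw [← hv_eq] at hsq
    exact absurd hsq.eq_nil_of_append_self hv

theorem subsingleton_sqFree_kleenePlus (hL : {w ∈ L | SqFreeWord w}.Subsingleton) :
    {w ∈ KleenePlus L | SqFreeWord w}.Subsingleton := by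
  refine hL.anti ?_
  rintro _ ⟨⟨vs, hne, hmem, rfl⟩, hsq⟩
  exact ⟨flatten_mem_of_sqFreeWord hL hne hmem hsq, hsq⟩

end Languages

theorem genLang_at_most_one_squarefree {α : Type} (L : Set (List α))
    (hL : GenLang L) : {w ∈ L | SqFreeWord w}.Subsingleton := by
  induction hL with
  | singleton w => exact Set.subsingleton_singleton.anti (Set.sep_subset _ _)
  | concat _ _ ih₁ ih₂ => exact subsingleton_sqFree_concat ih₁ ih₂
  | plus _ ih => exact subsingleton_sqFree_kleenePlus ih
end

section
/- If a point p starts an infinite chain of a relation R, and R equals the union over words w in a set W of finite words over an index set I of the composed relations R_w (composition of R_i along w), then p starts an infinite chain of the relation ⋃_{i ∈ I} R_i whose step sequence lies in the ω-language W^ω (after removing empty words). -/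
/-!
Choose for each step `f m R f (m+1)` a word `w m ∈ W` together with a path realising
`R_{w m}` from `f m` to `f (m+1)`. Since the words are nonempty,
`(m, j) ↦ |w 0| + ⋯ + |w (m-1)| + j` is a bijection `(Σ m, Fin |w m|) ≃ ℕ`, and reading
the paths through it glues them into one infinite chain whose index word is `w 0 w 1 ⋯`.
-/

/-- Composition of a family of relations along a finite word of indices. -/
def compWord {I C : Type} (Rfam : I → C → C → Prop) : List I → C → C → Prop
  | [], a, b => a = b
  | i :: w, a, b => ∃ u, Rfam i a u ∧ compWord Rfam w u b

theorem compWord.exists_path {I C : Type} {Rfam : I → C → C → Prop} :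
    ∀ {v : List I} {a b : C}, compWord Rfam v a b →
      ∃ g : ℕ → C, g 0 = a ∧ g v.length = b ∧
        ∀ j : Fin v.length, Rfam v[(j : ℕ)] (g j) (g (j + 1))
  | [], a, _, h => ⟨fun _ => a, rfl, h, fun j => j.elim0⟩
  | i :: _, a, _, ⟨u, hu, h⟩ => by
    obtain ⟨g, hg0, hglen, hgstep⟩ := h.exists_path
    refine ⟨fun | 0 => a | n + 1 => g n, rfl, hglen, Fin.cases ?_ fun j => hgstep j⟩
    simpa [hg0] using hu

section Blocks

variable {len : ℕ → ℕ}

def blockStart (len : ℕ → ℕ) (m : ℕ) : ℕ := (Finset.range m).sum len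

@[simp]
theorem blockStart_zero (len : ℕ → ℕ) : blockStart len 0 = 0 := Finset.sum_range_zero len

theorem blockStart_succ (len : ℕ → ℕ) (m : ℕ) :
    blockStart len (m + 1) = blockStart len m + len m :=
  Finset.sum_range_succ len m

theorem blockStart_mono (len : ℕ → ℕ) : Monotone (blockStart len) :=
  monotone_nat_of_le_succ fun m => by simp [blockStart_succ]

theorem blockStart_add_lt_blockStart {m m' : ℕ} (hm : m < m') (j : Fin (len m)) :
    blockStart len m + j < blockStart len m' :=
  calc blockStart len m + j < blockStart len (m + 1) := by rw [blockStart_succ]; omega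
    _ ≤ blockStart len m' := blockStart_mono len hm

theorem blockStart_add_injective :
    Function.Injective fun p : (Σ m, Fin (len m)) => blockStart len p.1 + p.2 := by
  rintro ⟨m, j⟩ ⟨m', j'⟩ h
  dsimp only at h
  obtain rfl : m = m' := by
    by_contra hne
    rcases Nat.lt_or_gt_of_ne hne with hlt | hlt
    · have := blockStart_add_lt_blockStart hlt j; omega
    · have := blockStart_add_lt_blockStart hlt j'; omega
  obtain rfl : j = j' := Fin.ext (by omega)
  rfl

theorem blockStart_add_surjective (hlen : ∀ m, 0 < len m) :
    Function.Surjective fun p : (Σ m, Fin (len m)) => blockStart len p.1 + p.2 := by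
  intro n
  induction n with
  | zero => exact ⟨⟨0, ⟨0, hlen 0⟩⟩, by simp⟩
  | succ n ih =>
    obtain ⟨⟨m, j⟩, rfl⟩ := ih
    by_cases hj : (j : ℕ) + 1 < len m
    · exact ⟨⟨m, ⟨j + 1, hj⟩⟩, by simp [add_assoc]⟩
    · exact ⟨⟨m + 1, ⟨0, hlen _⟩⟩, by simp [blockStart_succ]; omega⟩

noncomputable def blockEquiv (hlen : ∀ m, 0 < len m) : (Σ m, Fin (len m)) ≃ ℕ :=
  Equiv.ofBijective _ ⟨blockStart_add_injective, blockStart_add_surjective hlen⟩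

@[simp]
theorem blockEquiv_symm_blockStart_add (hlen : ∀ m, 0 < len m) (m : ℕ) (j : Fin (len m)) :
    (blockEquiv hlen).symm (blockStart len m + j) = ⟨m, j⟩ :=
  (blockEquiv hlen).symm_apply_apply ⟨m, j⟩

end Blocks

theorem exists_chain_of_block_chains {I C : Type} (Rfam : I → C → C → Prop) {len : ℕ → ℕ}
    (hlen : ∀ m, 0 < len m) (x : ℕ → ℕ → C) (a : (m : ℕ) → Fin (len m) → I)
    (hx : ∀ m, x m (len m) = x (m + 1) 0)
    (hstep : ∀ m (j : Fin (len m)), Rfam (a m j) (x m j) (x m (j + 1))) :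
    ∃ (f : ℕ → C) (idx : ℕ → I), f 0 = x 0 0 ∧ (∀ n, Rfam (idx n) (f n) (f (n + 1))) ∧
      ∀ m (j : Fin (len m)), idx (blockStart len m + j) = a m j := by
  let f (n : ℕ) : C := x ((blockEquiv hlen).symm n).1 ((blockEquiv hlen).symm n).2
  have hf (m : ℕ) (j : Fin (len m)) : f (blockStart len m + j) = x m j := by
    dsimp only [f]
    rw [blockEquiv_symm_blockStart_add]
  have hf_succ (m : ℕ) (j : Fin (len m)) : f (blockStart len m + j + 1) = x m (j + 1) := by
    by_cases hj : (j : ℕ) + 1 < len m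
    · exact hf m ⟨j + 1, hj⟩
    · have hj' : (j : ℕ) + 1 = len m := by omega
      have hnext := hf (m + 1) ⟨0, hlen _⟩
      rw [blockStart_succ, Fin.val_mk, add_zero] at hnext
      rw [add_assoc, hj', hnext, ← hx]
  refine ⟨f, fun n => a ((blockEquiv hlen).symm n).1 ((blockEquiv hlen).symm n).2, ?_,
    fun n => ?_, fun m j => by dsimp only; rw [blockEquiv_symm_blockStart_add]⟩
  · simpa using hf 0 ⟨0, hlen 0⟩
  · obtain ⟨⟨m, j⟩, rfl⟩ := blockStart_add_surjective hlen n
    dsimp only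
    rw [hf, hf_succ, blockEquiv_symm_blockStart_add]
    exact hstep m j

/-- If `R = ⋃_{w ∈ W} R_w` for a language `W` of nonempty words and `p` starts an
infinite `R`-chain, then `p` starts an infinite chain of steps of the individual
relations whose index word is an infinite concatenation of words from `W`. -/
theorem infinite_chain_omega_word {I C : Type} (Rfam : I → C → C → Prop)
    (W : Set (List I)) (hW : ∀ w ∈ W, w ≠ [])
    (R : C → C → Prop) (hR : ∀ a b, R a b ↔ ∃ w ∈ W, compWord Rfam w a b)
    (p : C) (hinf : ∃ f : ℕ → C, f 0 = p ∧ ∀ n, R (f n) (f (n + 1))) :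
    ∃ (f : ℕ → C) (idx : ℕ → I) (len : ℕ → ℕ),
      f 0 = p ∧
      (∀ n, Rfam (idx n) (f n) (f (n + 1))) ∧
      (∀ m, 0 < len m) ∧
      (∀ m, (List.ofFn fun j : Fin (len m) =>
        idx ((Finset.range m).sum len + j)) ∈ W) := by
  obtain ⟨f, rfl, hf⟩ := hinf
  choose w hwW hw using fun m => (hR _ _).1 (hf m)
  choose x hx0 hxlen hxstep using fun m => (hw m).exists_path
  have hlen (m : ℕ) : 0 < (w m).length := List.length_pos_iff.2 (hW _ (hwW m))
  obtain ⟨g, idx, hg0, hgstep, hidx⟩ := exists_chain_of_block_chains Rfam hlen x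
    (fun m j => (w m)[(j : ℕ)]) (fun m => (hxlen m).trans (hx0 (m + 1)).symm) hxstep
  refine ⟨g, idx, fun m => (w m).length, hg0.trans (hx0 0), hgstep, hlen, fun m => ?_⟩
  change List.ofFn (fun j : Fin (w m).length => idx (blockStart _ m + j)) ∈ W
  simpa only [hidx, List.ofFn_getElem] using hwW m
end
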